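/- Let $\alpha$ be an active root of a connected solvable spherical subgroup $H$ standardly embedded in $B$, and let $\pi(\alpha)$ be its associated simple root. If $\Delta(\alpha) = \Delta \cap \langle \mathrm{Supp}(\alpha)\rangle$ is of type $A$, $D$, or $E$, then $\alpha = \sum_{\gamma \in \mathrm{Supp}(\alpha)} \gamma$, i.e., $\alpha$ is the sum of all simple roots in its support, each with coefficient one. -/

import Mathlib

open scoped InnerProductSpace

/-- A reduced crystallographic root system in a Euclidean space `V`, together with a chosen
base of simple roots and the (integer) coordinates of each root in this base. -/
structure RootSystemData (V : Type) [NormedAddCommGroup V] [InnerProductSpace ℝ V] where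
  /-- the set of roots -/
  roots : Set V
  /-- the set of simple roots (the base) -/
  simples : Finset V
  finite : roots.Finite
  ne_zero : ∀ α ∈ roots, α ≠ (0 : V)
  neg_mem : ∀ α ∈ roots, -α ∈ roots
  reduced : ∀ α ∈ roots, (2 : ℝ) • α ∉ roots
  reflect_mem : ∀ α ∈ roots, ∀ β ∈ roots,
    β - (2 * ⟪α, β⟫_ℝ / ⟪α, α⟫_ℝ) • α ∈ roots
  cartan_int : ∀ α ∈ roots, ∀ β ∈ roots, ∃ n : ℤ,
    2 * ⟪α, β⟫_ℝ / ⟪α, α⟫_ℝ = (n : ℝ)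
  simples_mem : ∀ γ ∈ simples, γ ∈ roots
  simples_indep : LinearIndependent ℝ (fun γ : simples => (γ : V))
  /-- `coeff α γ` is the coefficient of the simple root `γ` in the root `α` -/
  coeff : V → V → ℤ
  coeff_spec : ∀ α ∈ roots, α = ∑ γ ∈ simples, coeff α γ • γ
  coeff_sign : ∀ α ∈ roots,
    (∀ γ ∈ simples, 0 ≤ coeff α γ) ∨ (∀ γ ∈ simples, coeff α γ ≤ 0)

namespace RootSystemData

variable {V : Type} [NormedAddCommGroup V] [InnerProductSpace ℝ V]

/-- The set of positive roots with respect to the base. -/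
def pos (R : RootSystemData V) : Set V :=
  {α ∈ R.roots | ∀ γ ∈ R.simples, 0 ≤ R.coeff α γ}

/-- The support of a root: the simple roots occurring in it with nonzero coefficient. -/
def Supp (R : RootSystemData V) (α : V) : Finset V :=
  R.simples.filter fun γ => R.coeff α γ ≠ 0

/-- The height of a root: the sum of its coefficients over the simple roots. -/
def height (R : RootSystemData V) (α : V) : ℤ :=
  ∑ γ ∈ R.simples, R.coeff α γ

/-- `s(α)`: the number of unordered representations of `α` as a sum of two positive
roots. -/
noncomputable def numDecomp (R : RootSystemData V) (α : V) : ℕ :=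
  {z : Sym2 V | ∃ β ∈ R.pos, ∃ γ ∈ R.pos, z = Sym2.mk β γ ∧ β + γ = α}.ncard

end RootSystemData

/-- The Lie-theoretic data attached to a connected solvable subgroup `H = S ⋉ N` of a
connected semisimple complex algebraic group `G`, standardly embedded in a Borel subgroup
`B = T ⋉ U`:
* the root system of `G` with respect to `T`, with the base determined by `B`;
* the restriction map `τ : 𝔛(T) ⊗ ℚ → 𝔛(S) ⊗ ℚ` of characters from `T` to the maximal
  torus `S = H ∩ T` of `H` (modelled as a linear map of vector spaces, `W = 𝔛(S) ⊗ ℚ`);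
* the nilpotent Lie algebra `L = 𝔲` of the maximal unipotent subgroup `U`, with its root
  space decomposition `𝔲 = ⨁_{α ∈ Δ₊} 𝔤_α`;
* the Lie algebra `𝔫 ⊆ 𝔲` of the unipotent radical `N = H ∩ U` of `H`, which is a
  subalgebra and is a sum of its `S`-weight components. -/
structure SphericalSetup (V : Type) [NormedAddCommGroup V] [InnerProductSpace ℝ V]
    (W : Type) [AddCommGroup W] [Module ℝ W]
    (L : Type) [LieRing L] [LieAlgebra ℂ L] extends RootSystemData V where
  /-- restriction of characters from `T` to `S` -/
  τ : V →ₗ[ℝ] W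
  /-- the root spaces `𝔤_α ⊆ 𝔲` -/
  g : V → Submodule ℂ L
  g_dim : ∀ α ∈ toRootSystemData.pos, Module.finrank ℂ (g α) = 1
  g_bot : ∀ α, α ∉ toRootSystemData.pos → g α = ⊥
  g_top : (⨆ α ∈ toRootSystemData.pos, g α) = (⊤ : Submodule ℂ L)
  bracket_mem : ∀ (α β : V), ∀ x ∈ g α, ∀ y ∈ g β, ⁅x, y⁆ ∈ g (α + β)
  bracket_ne : ∀ α ∈ toRootSystemData.pos, ∀ β ∈ toRootSystemData.pos,
    α + β ∈ toRootSystemData.pos → ∃ x ∈ g α, ∃ y ∈ g β, ⁅x, y⁆ ≠ (0 : L)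
  /-- the Lie algebra `𝔫` of the unipotent radical `N` of `H` -/
  n : Submodule ℂ L
  n_bracket : ∀ x ∈ n, ∀ y ∈ n, ⁅x, y⁆ ∈ n
  n_weight : n = ⨆ w : W, n ⊓ ⨆ α ∈ {a ∈ toRootSystemData.pos | τ a = w}, g α

namespace SphericalSetup

variable {V : Type} [NormedAddCommGroup V] [InnerProductSpace ℝ V]
  {W : Type} [AddCommGroup W] [Module ℝ W]
  {L : Type} [LieRing L] [LieAlgebra ℂ L]

/-- The `S`-weight subspace `𝔲_w ⊆ 𝔲` of weight `w`. -/
def uSp (S : SphericalSetup V W L) (w : W) : Submodule ℂ L :=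
  ⨆ α ∈ {a ∈ S.pos | S.τ a = w}, S.g α

/-- `c_w`: the codimension of `𝔫_w = 𝔫 ∩ 𝔲_w` in `𝔲_w`. -/
noncomputable def c (S : SphericalSetup V W L) (w : W) : ℕ :=
  Module.finrank ℂ (S.uSp w) - Module.finrank ℂ ↥(S.n ⊓ S.uSp w)

/-- The sphericity of `H` in `G`, via the criterion of Theorem `solvable_spherical`:
`c_w ≤ 1` for every weight `w`, and the weights `w` with `c_w = 1` are linearly
independent in `𝔛(S) ⊗ ℚ`. -/
def Spherical (S : SphericalSetup V W L) : Prop :=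
  (∀ w : W, S.c w ≤ 1) ∧
    LinearIndependent ℝ (fun w : {w : W // S.c w = 1} => (w : W))

/-- The set `Ψ` of active roots: positive roots `α` with `𝔤_α ⊄ 𝔫`. -/
def active (S : SphericalSetup V W L) : Set V :=
  {α ∈ S.pos | ¬ S.g α ≤ S.n}

/-- The family `F(α)` of active roots generated by an active root `α`: the root `α`
together with all active roots subordinate to it. -/
def family (S : SphericalSetup V W L) (α : V) : Set V :=
  insert α {β ∈ S.active | α - β ∈ S.pos}

end SphericalSetup

/-! Let `summands δ` be the set of positive roots `β` with `δ - β` positive, i.e. the ordered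
decompositions of `δ` into two positive roots. In a simply-laced root system its size is at least
`2 (ht δ - 1)`: if `δ - γ` is a root for a simple root `γ`, the reflection `s_γ` maps the
summands of `δ - γ` injectively to summands of `δ` other than `γ` and `δ - γ`.

For an active root `α` sphericity bounds this from above. Of two complementary summands at least
one is active, so `|summands α| ≤ 2 (|F(α)| - 1)`. The restriction `τ` is injective on `F(α)`:
if `τ β = τ β'` for distinct `β, β'` then `α - β + β'` is not a root, and since `𝔫_w` has
codimension at most one in `𝔲_w` the space `𝔤_β` lies in `𝔤_β' + 𝔫`; bracketing with
`𝔤_{α-β} ⊆ 𝔫` then puts a nonzero vector of `𝔤_α` into `𝔫`. The weights `τ β` have `c = 1`,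
so they are linearly independent in `τ(span Supp α)`, whence `|F(α)| ≤ |Supp α|`. Altogether
`ht α ≤ |Supp α|`, which forces every coefficient of `α` on its support to be `1`. -/

open Submodule Module

theorem LinearIndependent.apply_ne_add {ι R M : Type*} [Ring R] [Nontrivial R]
    [AddCommGroup M] [Module R M] {v : ι → M} (hv : LinearIndependent R v) (i j k : ι) :
    v i ≠ v j + v k := by
  intro h
  by_cases hij : i = j
  · subst hij
    exact hv.ne_zero k (by simpa using h)
  by_cases hik : i = k
  · subst hik
    exact hv.ne_zero j (by simpa using h)
  refine hv.notMem_span_image (x := i) (s := {j, k}) (by simp [hij, hik]) ?_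
  rw [h]
  exact add_mem (subset_span ⟨j, by simp, rfl⟩) (subset_span ⟨k, by simp, rfl⟩)

theorem LinearIndepOn.ncard_le_card_of_subset_span {K M : Type*} [DivisionRing K]
    [AddCommGroup M] [Module K M] {s : Set M} {t : Finset M} (hs : LinearIndepOn K id s)
    (hst : s ⊆ span K (t : Set M)) : s.ncard ≤ t.card := by
  rcases s.finite_or_infinite with hfin | hinf
  · lift s to Finset M using hfin
    rw [Set.ncard_coe_finset, ← finrank_span_finset_eq_card hs]
    exact (Submodule.finrank_mono (span_le.mpr hst)).trans (finrank_span_finset_le_card t)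
  · simp [hinf.ncard]

section rootReflection

variable {V : Type} [NormedAddCommGroup V] [InnerProductSpace ℝ V]

noncomputable def rootReflection (γ x : V) : V :=
  x - (2 * ⟪γ, x⟫_ℝ / ⟪γ, γ⟫_ℝ) • γ

theorem rootReflection_sub (γ x y : V) :
    rootReflection γ (x - y) = rootReflection γ x - rootReflection γ y := by
  simp only [rootReflection, inner_sub_right, mul_sub, sub_div, sub_smul]
  abel

theorem rootReflection_self {γ : V} (hγ : γ ≠ 0) : rootReflection γ γ = -γ := by
  have : ⟪γ, γ⟫_ℝ ≠ 0 := inner_self_ne_zero.mpr hγ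
  rw [rootReflection, mul_div_assoc, div_self this, mul_one, two_smul]
  abel

theorem rootReflection_involutive {γ : V} (hγ : γ ≠ 0) :
    Function.Involutive (rootReflection γ) := fun x => by
  have : ⟪γ, γ⟫_ℝ ≠ 0 := inner_self_ne_zero.mpr hγ
  simp only [rootReflection, inner_sub_right, real_inner_smul_right]
  rw [sub_sub, ← add_smul, sub_eq_self, smul_eq_zero]
  left
  field_simp
  ring

end rootReflection

namespace RootSystemData

variable {V : Type} [NormedAddCommGroup V] [InnerProductSpace ℝ V] (R : RootSystemData V)

theorem coeff_eq_of_eq_sum {δ : V} (hδ : δ ∈ R.roots) {c : V → ℤ}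
    (h : δ = ∑ γ ∈ R.simples, c γ • γ) : ∀ γ ∈ R.simples, R.coeff δ γ = c γ := by
  intro γ hγ
  have hzero : ∑ γ ∈ R.simples, ((R.coeff δ γ - c γ : ℤ) : ℝ) • id γ = 0 := by
    simp only [id, Int.cast_smul_eq_zsmul, sub_smul, Finset.sum_sub_distrib,
      ← R.coeff_spec δ hδ, ← h, sub_self]
  have hli : LinearIndepOn ℝ id (R.simples : Set V) := R.simples_indep
  have := linearIndepOn_finset_iff.mp hli _ hzero γ hγ
  rwa [Int.cast_eq_zero, sub_eq_zero] at this

theorem coeff_add {β γ : V} (hβ : β ∈ R.roots) (hγ : γ ∈ R.roots) (hβγ : β + γ ∈ R.roots) :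
    ∀ γ' ∈ R.simples, R.coeff (β + γ) γ' = R.coeff β γ' + R.coeff γ γ' :=
  R.coeff_eq_of_eq_sum hβγ <| by
    simp only [add_smul, Finset.sum_add_distrib, ← R.coeff_spec β hβ, ← R.coeff_spec γ hγ]

theorem coeff_neg {β : V} (hβ : β ∈ R.roots) :
    ∀ γ ∈ R.simples, R.coeff (-β) γ = -R.coeff β γ :=
  R.coeff_eq_of_eq_sum (R.neg_mem β hβ) <| by
    simp only [neg_smul, Finset.sum_neg_distrib, ← R.coeff_spec β hβ]

open scoped Classical in
theorem coeff_simple {γ : V} (hγ : γ ∈ R.simples) :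
    ∀ γ' ∈ R.simples, R.coeff γ γ' = if γ' = γ then 1 else 0 :=
  R.coeff_eq_of_eq_sum (R.simples_mem γ hγ) <| by
    simp [ite_smul, Finset.sum_ite_eq', hγ]

open scoped Classical in
theorem coeff_sub_zsmul {ε γ : V} (hε : ε ∈ R.roots) (hγ : γ ∈ R.simples) (n : ℤ)
    (hεγ : ε - n • γ ∈ R.roots) :
    ∀ γ' ∈ R.simples, R.coeff (ε - n • γ) γ' = R.coeff ε γ' - if γ' = γ then n else 0 :=
  R.coeff_eq_of_eq_sum hεγ <| by
    simp only [sub_smul, ite_smul, zero_smul, Finset.sum_sub_distrib, Finset.sum_ite_eq',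
      if_pos hγ, ← R.coeff_spec ε hε]

theorem mem_pos_of_coeff_pos {δ γ : V} (hδ : δ ∈ R.roots) (hγ : γ ∈ R.simples)
    (h : 0 < R.coeff δ γ) : δ ∈ R.pos :=
  ⟨hδ, (R.coeff_sign δ hδ).resolve_right fun hneg => (hneg γ hγ).not_gt h⟩

theorem exists_coeff_ne_zero {δ : V} (hδ : δ ∈ R.roots) :
    ∃ γ ∈ R.simples, R.coeff δ γ ≠ 0 := by
  by_contra! h
  refine R.ne_zero δ hδ ?_
  rw [R.coeff_spec δ hδ]
  exact Finset.sum_eq_zero fun γ hγ => by rw [h γ hγ, zero_smul]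

theorem neg_notMem_pos {β : V} (hβ : β ∈ R.pos) : -β ∉ R.pos := by
  intro hneg
  obtain ⟨γ, hγ, hne⟩ := R.exists_coeff_ne_zero hβ.1
  have := hneg.2 γ hγ
  rw [R.coeff_neg hβ.1 γ hγ] at this
  have := hβ.2 γ hγ
  omega

theorem simple_mem_pos {γ : V} (hγ : γ ∈ R.simples) : γ ∈ R.pos :=
  R.mem_pos_of_coeff_pos (R.simples_mem γ hγ) hγ (by simp [R.coeff_simple hγ γ hγ])

theorem height_add {β γ : V} (hβ : β ∈ R.roots) (hγ : γ ∈ R.roots) (hβγ : β + γ ∈ R.roots) :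
    R.height (β + γ) = R.height β + R.height γ := by
  simp only [height, ← Finset.sum_add_distrib]
  exact Finset.sum_congr rfl (R.coeff_add hβ hγ hβγ)

theorem height_simple {γ : V} (hγ : γ ∈ R.simples) : R.height γ = 1 := by
  classical
  rw [height, Finset.sum_congr rfl (R.coeff_simple hγ), Finset.sum_ite_eq_of_mem' _ _ _ hγ]

theorem mem_supp {δ γ : V} : γ ∈ R.Supp δ ↔ γ ∈ R.simples ∧ R.coeff δ γ ≠ 0 :=
  Finset.mem_filter

theorem mem_span_of_supp_subset {δ : V} {K : Finset V} (hδ : δ ∈ R.roots)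
    (hK : R.Supp δ ⊆ K) : δ ∈ span ℝ (K : Set V) := by
  rw [R.coeff_spec δ hδ]
  refine sum_mem fun γ hγ => ?_
  by_cases h : R.coeff δ γ = 0
  · simp [h]
  · exact zsmul_mem (subset_span (hK (R.mem_supp.mpr ⟨hγ, h⟩))) _

theorem exists_ne_coeff_pos {ε γ : V} (hε : ε ∈ R.pos) (hγ : γ ∈ R.simples) (hne : ε ≠ γ) :
    ∃ γ' ∈ R.simples, γ' ≠ γ ∧ 0 < R.coeff ε γ' := by
  by_contra! h
  set c := R.coeff ε γ
  have hεc : ε = (c : ℝ) • γ := by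
    rw [R.coeff_spec ε hε.1, Finset.sum_eq_single_of_mem γ hγ, Int.cast_smul_eq_zsmul]
    intro γ' hγ' hne'
    rw [le_antisymm (h γ' hγ' hne') (hε.2 γ' hγ'), zero_smul]
  have hγ0 : ⟪γ, γ⟫_ℝ ≠ 0 := inner_self_ne_zero.mpr (R.ne_zero γ (R.simples_mem γ hγ))
  have hc0 : (c : ℝ) ≠ 0 := by
    rintro hc
    exact R.ne_zero ε hε.1 (by rw [hεc, hc, zero_smul])
  -- integrality of `2 ⟪ε, γ⟫ / ⟪ε, ε⟫ = 2 / c` forces `c ∣ 2`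
  obtain ⟨n, hn⟩ := R.cartan_int ε hε.1 γ (R.simples_mem γ hγ)
  rw [hεc, real_inner_smul_left, real_inner_smul_left, real_inner_smul_right] at hn
  have hcn : c * n = 2 := by
    field_simp at hn
    exact_mod_cast hn.symm
  have hc : 0 < c := lt_of_le_of_ne (hε.2 γ hγ) (by exact_mod_cast hc0.symm)
  have hc2 : c ≤ 2 := Int.le_of_dvd two_pos ⟨n, hcn.symm⟩
  interval_cases c
  · exact hne (by rw [hεc, Int.cast_one, one_smul])
  · exact R.reduced γ (R.simples_mem γ hγ) (by rw [← Int.cast_two (R := ℝ), ← hεc]; exact hε.1)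

theorem rootReflection_mem_roots {γ x : V} (hγ : γ ∈ R.roots) (hx : x ∈ R.roots) :
    rootReflection γ x ∈ R.roots :=
  R.reflect_mem γ hγ x hx

theorem rootReflection_eq_sub_zsmul {γ x : V} (hγ : γ ∈ R.roots) (hx : x ∈ R.roots) :
    ∃ n : ℤ, rootReflection γ x = x - n • γ := by
  obtain ⟨n, hn⟩ := R.cartan_int γ hγ x hx
  exact ⟨n, by rw [rootReflection, hn, Int.cast_smul_eq_zsmul]⟩

theorem rootReflection_mem_pos {γ ε : V} (hγ : γ ∈ R.simples) (hε : ε ∈ R.pos) (hne : ε ≠ γ) :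
    rootReflection γ ε ∈ R.pos := by
  have hγr := R.simples_mem γ hγ
  have hmem := R.rootReflection_mem_roots hγr hε.1
  obtain ⟨γ', hγ', hγ'γ, hpos⟩ := R.exists_ne_coeff_pos hε hγ hne
  obtain ⟨n, hn⟩ := R.rootReflection_eq_sub_zsmul hγr hε.1
  rw [hn] at hmem ⊢
  refine R.mem_pos_of_coeff_pos hmem hγ' ?_
  rwa [R.coeff_sub_zsmul hε.1 hγ n hmem γ' hγ', if_neg hγ'γ, sub_zero]

theorem eq_sum_supp_of_height_le_card {δ : V} (hδ : δ ∈ R.pos)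
    (h : R.height δ ≤ (R.Supp δ).card) : δ = ∑ γ ∈ R.Supp δ, γ := by
  have hcoeff : ∀ γ ∈ R.Supp δ, 1 ≤ R.coeff δ γ := fun γ hγ => by
    have := (R.mem_supp.mp hγ).2
    have := hδ.2 γ (R.mem_supp.mp hγ).1
    omega
  have hsum : ∑ γ ∈ R.Supp δ, R.coeff δ γ = ∑ _γ ∈ R.Supp δ, 1 := by
    refine le_antisymm ?_ (Finset.sum_le_sum hcoeff)
    calc ∑ γ ∈ R.Supp δ, R.coeff δ γ = R.height δ := Finset.sum_filter_ne_zero _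
      _ ≤ (R.Supp δ).card := h
      _ = ∑ _γ ∈ R.Supp δ, 1 := by simp
  have hone := (Finset.sum_eq_sum_iff_of_le hcoeff).mp hsum.symm
  calc δ = ∑ γ ∈ R.Supp δ, R.coeff δ γ • γ := by
        rw [Supp, Finset.sum_filter_of_ne fun γ _ h' => by rintro h0; simp [h0] at h']
        exact R.coeff_spec δ hδ.1
    _ = ∑ γ ∈ R.Supp δ, γ := Finset.sum_congr rfl fun γ hγ => by rw [← hone γ hγ, one_smul]

def summands (δ : V) : Set V :=
  {β ∈ R.pos | δ - β ∈ R.pos}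

theorem summands_finite (δ : V) : (R.summands δ).Finite :=
  R.finite.subset fun _ hβ => hβ.1.1

theorem sub_mem_summands {δ β : V} (h : β ∈ R.summands δ) : δ - β ∈ R.summands δ :=
  ⟨h.2, by rw [sub_sub_cancel]; exact h.1⟩

theorem supp_subset_of_mem_summands {δ β : V} (hδ : δ ∈ R.roots) (h : β ∈ R.summands δ) :
    R.Supp β ⊆ R.Supp δ := by
  intro γ hγ
  rw [mem_supp] at hγ ⊢
  have := R.coeff_add h.1.1 h.2.1 (by rwa [add_sub_cancel]) γ hγ.1
  rw [add_sub_cancel] at this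
  have := h.1.2 γ hγ.1
  have := h.2.2 γ hγ.1
  exact ⟨hγ.1, by omega⟩

def IsSimplyLacedOn (K : Finset V) (N : ℝ) : Prop :=
  ∀ δ ∈ R.roots, δ ∈ span ℝ (K : Set V) → ⟪δ, δ⟫_ℝ = N

namespace IsSimplyLacedOn

variable {R} {K : Finset V} {N : ℝ}

theorem zero_lt (hK : R.IsSimplyLacedOn K N) {δ : V} (hδ : δ ∈ R.roots)
    (hδK : δ ∈ span ℝ (K : Set V)) : 0 < N := by
  rw [← hK δ hδ hδK]
  exact real_inner_self_pos.mpr (R.ne_zero δ hδ)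

theorem inner_eq_of_add_mem (hK : R.IsSimplyLacedOn K N) {δ ε : V} (hδ : δ ∈ R.roots)
    (hδK : δ ∈ span ℝ (K : Set V)) (hε : ε ∈ R.roots) (hεK : ε ∈ span ℝ (K : Set V))
    (h : δ + ε ∈ R.roots) : ⟪δ, ε⟫_ℝ = -(N / 2) := by
  have := hK _ h (add_mem hδK hεK)
  rw [real_inner_add_add_self, hK δ hδ hδK, hK ε hε hεK] at this
  linarith

theorem inner_eq_of_sub_mem (hK : R.IsSimplyLacedOn K N) {δ ε : V} (hδ : δ ∈ R.roots)
    (hδK : δ ∈ span ℝ (K : Set V)) (hε : ε ∈ R.roots) (hεK : ε ∈ span ℝ (K : Set V))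
    (h : δ - ε ∈ R.roots) : ⟪δ, ε⟫_ℝ = N / 2 := by
  have := hK _ h (sub_mem hδK hεK)
  rw [real_inner_sub_sub_self, hK δ hδ hδK, hK ε hε hεK] at this
  linarith

theorem inner_le_of_ne (hK : R.IsSimplyLacedOn K N) {δ ε : V} (hδ : δ ∈ R.roots)
    (hδK : δ ∈ span ℝ (K : Set V)) (hε : ε ∈ R.roots) (hεK : ε ∈ span ℝ (K : Set V))
    (hne : δ ≠ ε) : ⟪δ, ε⟫_ℝ ≤ N / 2 := by
  have hN := hK.zero_lt hδ hδK
  obtain ⟨n, hn⟩ := R.cartan_int δ hδ ε hε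
  rw [hK δ hδ hδK] at hn
  have hval : ⟪δ, ε⟫_ℝ = n * N / 2 := by
    field_simp at hn
    linarith
  -- `‖δ - ε‖ > 0` gives `⟪δ, ε⟫ < N`, and integrality then gives `⟪δ, ε⟫ ≤ N / 2`
  have hlt : ⟪δ, ε⟫_ℝ < N := by
    have := real_inner_self_pos.mpr (sub_ne_zero.mpr hne)
    rw [real_inner_sub_sub_self, hK δ hδ hδK, hK ε hε hεK] at this
    linarith
  have hn2 : (n : ℝ) < 2 := by
    rw [hval] at hlt
    nlinarith
  have hn1 : (n : ℝ) ≤ 1 := by exact_mod_cast Int.le_of_lt_add_one (by exact_mod_cast hn2)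
  rw [hval]
  nlinarith

theorem add_notMem_roots_of_sub_mem (hK : R.IsSimplyLacedOn K N) {β γ : V} (hβ : β ∈ R.roots)
    (hβK : β ∈ span ℝ (K : Set V)) (hγ : γ ∈ R.roots) (hγK : γ ∈ span ℝ (K : Set V))
    (h : β - γ ∈ R.roots) : β + γ ∉ R.roots := fun h' => by
  have h1 := hK.inner_eq_of_sub_mem hβ hβK hγ hγK h
  have h2 := hK.inner_eq_of_add_mem hβ hβK hγ hγK h'
  have := hK.zero_lt hγ hγK
  linarith

theorem sub_add_notMem_roots (hK : R.IsSimplyLacedOn K N) {α β β' : V} (hα : α ∈ R.roots)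
    (hαK : α ∈ span ℝ (K : Set V)) (hβ : β ∈ R.roots) (hβK : β ∈ span ℝ (K : Set V))
    (hβ' : β' ∈ R.roots) (hβ'K : β' ∈ span ℝ (K : Set V)) (hαβ : α - β ∈ R.roots)
    (hαβ' : N / 2 ≤ ⟪α, β'⟫_ℝ) (hne : β ≠ β') : α - β + β' ∉ R.roots := fun h => by
  have h1 := hK.inner_eq_of_add_mem hαβ (sub_mem hαK hβK) hβ' hβ'K h
  have h2 := hK.inner_le_of_ne hβ hβK hβ' hβ'K hne
  have := hK.zero_lt hα hαK
  rw [inner_sub_left] at h1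
  linarith

theorem exists_sub_simple_mem_pos (hK : R.IsSimplyLacedOn K N) {δ : V} (hδ : δ ∈ R.pos)
    (hsupp : R.Supp δ ⊆ K) (hδs : δ ∉ R.simples) : ∃ γ ∈ R.Supp δ, δ - γ ∈ R.pos := by
  have hδK := R.mem_span_of_supp_subset hδ.1 hsupp
  have hsum : ⟪δ, δ⟫_ℝ = ∑ γ ∈ R.simples, (R.coeff δ γ : ℝ) * ⟪γ, δ⟫_ℝ := by
    calc ⟪δ, δ⟫_ℝ = ⟪∑ γ ∈ R.simples, R.coeff δ γ • γ, δ⟫_ℝ := by rw [← R.coeff_spec δ hδ.1]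
      _ = _ := by simp only [sum_inner, ← Int.cast_smul_eq_zsmul ℝ, real_inner_smul_left]
  obtain ⟨γ, hγs, hterm⟩ : ∃ γ ∈ R.simples, 0 < (R.coeff δ γ : ℝ) * ⟪γ, δ⟫_ℝ := by
    by_contra! h
    have := Finset.sum_nonpos h
    rw [← hsum, hK δ hδ.1 hδK] at this
    exact this.not_gt (hK.zero_lt hδ.1 hδK)
  have hcoeff : (0 : ℝ) ≤ R.coeff δ γ := by exact_mod_cast hδ.2 γ hγs
  have hinner : 0 < ⟪γ, δ⟫_ℝ := pos_of_mul_pos_right hterm hcoeff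
  have hγ : γ ∈ R.Supp δ := R.mem_supp.mpr ⟨hγs, fun h => by simp [h] at hterm⟩
  have hγr := R.simples_mem γ hγs
  have hγK : γ ∈ span ℝ (K : Set V) := subset_span (hsupp hγ)
  have hne : δ ≠ γ := fun h => hδs (h ▸ hγs)
  have hN := hK.zero_lt hγr hγK
  obtain ⟨n, hn⟩ := R.cartan_int γ hγr δ hδ.1
  rw [hK γ hγr hγK] at hn
  -- `0 < ⟪γ, δ⟫ ≤ N / 2` pins the Cartan integer to `1`, so the reflection of `δ` is `δ - γ`
  have hn1 : n = 1 := by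
    have hle := hK.inner_le_of_ne hγr hγK hδ.1 hδK (Ne.symm hne)
    have h1 : (0 : ℝ) < n := by rw [← hn]; positivity
    have h2 : (n : ℝ) ≤ 1 := by rw [← hn, div_le_one hN]; linarith
    have : 0 < n := by exact_mod_cast h1
    have : n ≤ 1 := by exact_mod_cast h2
    omega
  refine ⟨γ, hγ, ?_⟩
  have := R.rootReflection_mem_pos hγs hδ hne
  rwa [rootReflection, hK γ hγr hγK, hn, hn1, Int.cast_one, one_smul] at this

theorem mapsTo_rootReflection_summands (hK : R.IsSimplyLacedOn K N) {δ γ : V}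
    (hδ : δ ∈ R.roots) (hsupp : R.Supp δ ⊆ K) (hγ : γ ∈ R.Supp δ) (hβ : δ - γ ∈ R.pos) :
    Set.MapsTo (rootReflection γ) (R.summands (δ - γ)) (R.summands δ \ {γ, δ - γ}) := by
  set β := δ - γ with hβdef
  have hγs := (R.mem_supp.mp hγ).1
  have hγr := R.simples_mem γ hγs
  have hγ0 := R.ne_zero γ hγr
  have hγK : γ ∈ span ℝ (K : Set V) := subset_span (hsupp hγ)
  have hβK : β ∈ span ℝ (K : Set V) := sub_mem (R.mem_span_of_supp_subset hδ hsupp) hγK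
  have hN := hK.zero_lt hγr hγK
  have hreflβ : rootReflection γ β = δ := by
    rw [rootReflection, hK γ hγr hγK, hK.inner_eq_of_add_mem hγr hγK hβ.1 hβK
      (by rwa [hβdef, add_sub_cancel]), show 2 * -(N / 2) / N = (-1 : ℝ) by field_simp,
      neg_one_smul, sub_neg_eq_add, hβdef, sub_add_cancel]
  -- `ε = γ` would make `β - γ`, `β`, `β + γ = δ` a root string of length three
  have hne : ∀ ε ∈ R.summands β, ε ≠ γ := fun ε hε hεγ =>
    hK.add_notMem_roots_of_sub_mem hβ.1 hβK hγr hγK (hεγ ▸ hε.2.1)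
      (by rwa [hβdef, sub_add_cancel])
  intro ε hε
  have hε' := R.sub_mem_summands hε
  refine ⟨⟨R.rootReflection_mem_pos hγs hε.1 (hne ε hε), ?_⟩, ?_⟩
  · rw [← hreflβ, ← rootReflection_sub]
    exact R.rootReflection_mem_pos hγs hε.2 (hne _ hε')
  · simp only [Set.mem_insert_iff, Set.mem_singleton_iff]
    rintro (h | h)
    · have : ε = -γ := by rw [← rootReflection_involutive hγ0 ε, h, rootReflection_self hγ0]
      exact R.neg_notMem_pos (R.simple_mem_pos hγs) (this ▸ hε.1)
    · have : ε = δ := by rw [← rootReflection_involutive hγ0 ε, h, hreflβ]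
      have hneg := hε.2
      rw [this, hβdef, sub_sub_cancel_left] at hneg
      exact R.neg_notMem_pos (R.simple_mem_pos hγs) hneg

theorem ncard_summands_sub_add_two_le (hK : R.IsSimplyLacedOn K N) {δ γ : V}
    (hδ : δ ∈ R.roots) (hsupp : R.Supp δ ⊆ K) (hγ : γ ∈ R.Supp δ) (hβ : δ - γ ∈ R.pos) :
    (R.summands (δ - γ)).ncard + 2 ≤ (R.summands δ).ncard := by
  have hγs := (R.mem_supp.mp hγ).1
  have hγ0 := R.ne_zero γ (R.simples_mem γ hγs)
  have hγδ : γ ∈ R.summands δ := ⟨R.simple_mem_pos hγs, hβ⟩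
  have hγβ : γ ≠ δ - γ := fun h => R.reduced γ (R.simples_mem γ hγs) <| by
    rw [two_smul]
    nth_rewrite 2 [h]
    rwa [add_sub_cancel]
  have hmaps := hK.mapsTo_rootReflection_summands hδ hsupp hγ hβ
  have hdisj : Disjoint (rootReflection γ '' R.summands (δ - γ)) {γ, δ - γ} :=
    Set.disjoint_left.mpr fun _ hx => (hmaps.image_subset hx).2
  have hsub : rootReflection γ '' R.summands (δ - γ) ∪ {γ, δ - γ} ⊆ R.summands δ :=
    Set.union_subset (hmaps.image_subset.trans Set.sdiff_subset)
      (Set.insert_subset hγδ (Set.singleton_subset_iff.mpr (R.sub_mem_summands hγδ)))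
  calc (R.summands (δ - γ)).ncard + 2
      = (rootReflection γ '' R.summands (δ - γ) ∪ {γ, δ - γ}).ncard := by
        rw [Set.ncard_union_eq hdisj ((R.summands_finite _).image _) (Set.toFinite _),
          Set.ncard_image_of_injective _ (rootReflection_involutive hγ0).injective,
          Set.ncard_pair hγβ]
    _ ≤ (R.summands δ).ncard := Set.ncard_le_ncard hsub (R.summands_finite δ)

theorem two_mul_height_le_ncard_summands_add_two (hK : R.IsSimplyLacedOn K N) {δ : V}
    (hδ : δ ∈ R.pos) (hsupp : R.Supp δ ⊆ K) : 2 * R.height δ ≤ (R.summands δ).ncard + 2 := by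
  suffices ∀ n : ℕ, ∀ δ ∈ R.pos, R.Supp δ ⊆ K → R.height δ ≤ n →
      2 * R.height δ ≤ (R.summands δ).ncard + 2 from
    this _ δ hδ hsupp (Int.self_le_toNat _)
  intro n
  induction n with
  | zero => intro δ _ _ h; omega
  | succ n ih =>
    intro δ hδ hsupp hht
    by_cases hδs : δ ∈ R.simples
    · rw [R.height_simple hδs]
      omega
    obtain ⟨γ, hγ, hβ⟩ := hK.exists_sub_simple_mem_pos hδ hsupp hδs
    have hγs := (R.mem_supp.mp hγ).1
    have hγδ : γ ∈ R.summands δ := ⟨R.simple_mem_pos hγs, hβ⟩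
    have hheight : R.height δ = R.height (δ - γ) + 1 := by
      rw [← R.height_simple hγs, ← R.height_add hβ.1 (R.simples_mem γ hγs)
        (by rw [sub_add_cancel]; exact hδ.1), sub_add_cancel]
    have hsupp' : R.Supp (δ - γ) ⊆ K :=
      (R.supp_subset_of_mem_summands hδ.1 (R.sub_mem_summands hγδ)).trans hsupp
    have := ih (δ - γ) hβ hsupp' (by push_cast at hht; omega)
    have := hK.ncard_summands_sub_add_two_le hδ.1 hsupp hγ hβ
    omega

end IsSimplyLacedOn

end RootSystemData

namespace SphericalSetup

variable {V : Type} [NormedAddCommGroup V] [InnerProductSpace ℝ V]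
  {W : Type} [AddCommGroup W] [Module ℝ W]
  {L : Type} [LieRing L] [LieAlgebra ℂ L] (S : SphericalSetup V W L)

theorem g_le_uSp {δ : V} (hδ : δ ∈ S.pos) : S.g δ ≤ S.uSp (S.τ δ) :=
  le_biSup S.g ⟨hδ, rfl⟩

theorem g_le_of_mem {δ : V} (hδ : δ ∈ S.pos) {v : L} (hv : v ∈ S.g δ) (hv0 : v ≠ 0)
    {M : Submodule ℂ L} (hM : v ∈ M) : S.g δ ≤ M := by
  have : FiniteDimensional ℂ (S.g δ) := finite_of_finrank_pos (by rw [S.g_dim δ hδ]; exact one_pos)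
  have hspan : span ℂ {v} = S.g δ :=
    eq_of_le_of_finrank_eq ((span_singleton_le_iff_mem _ _).mpr hv)
      (by rw [S.g_dim δ hδ, finrank_span_singleton hv0])
  rwa [← hspan, span_singleton_le_iff_mem]

theorem c_eq_one_of_mem_active [FiniteDimensional ℂ L] (hS : S.Spherical) {δ : V}
    (hδ : δ ∈ S.active) : S.c (S.τ δ) = 1 := by
  have hlt : S.n ⊓ S.uSp (S.τ δ) < S.uSp (S.τ δ) :=
    inf_le_right.lt_of_ne fun h => hδ.2 ((S.g_le_uSp hδ.1).trans (h.symm.le.trans inf_le_left))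
  have := finrank_lt_finrank_of_lt hlt
  have := hS.1 (S.τ δ)
  unfold c at this ⊢
  omega

theorem sup_inf_uSp_eq [FiniteDimensional ℂ L] (hS : S.Spherical) {w : W}
    {P : Submodule ℂ L} (hP : P ≤ S.uSp w) (hPn : ¬P ≤ S.n) :
    P ⊔ (S.n ⊓ S.uSp w) = S.uSp w := by
  have hle : P ⊔ (S.n ⊓ S.uSp w) ≤ S.uSp w := sup_le hP inf_le_right
  have hlt : S.n ⊓ S.uSp w < P ⊔ (S.n ⊓ S.uSp w) :=
    le_sup_right.lt_of_ne fun h => hPn (le_sup_left.trans (h.symm.le.trans inf_le_left))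
  have := finrank_lt_finrank_of_lt hlt
  have := finrank_mono hle
  have := hS.1 w
  unfold c at this
  exact eq_of_le_of_finrank_eq hle (by omega)

theorem mem_active_of_add {α β γ : V} (hα : α ∈ S.active) (hβ : β ∈ S.pos) (hγ : γ ∈ S.pos)
    (h : β + γ = α) (hβn : S.g β ≤ S.n) : γ ∈ S.active := by
  refine ⟨hγ, fun hγn => hα.2 ?_⟩
  obtain ⟨x, hx, y, hy, hxy⟩ := S.bracket_ne β hβ γ hγ (h ▸ hα.1)
  exact S.g_le_of_mem hα.1 (h ▸ S.bracket_mem β γ x hx y hy) hxy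
    (S.n_bracket x (hβn hx) y (hγn hy))

theorem notMem_active_of_add [FiniteDimensional ℂ L] (hS : S.Spherical) {α β γ : V}
    (hα : α ∈ S.active) (hβ : β ∈ S.active) (h : β + γ = α) : γ ∉ S.active := fun hγ =>
  hS.2.apply_ne_add ⟨S.τ α, S.c_eq_one_of_mem_active hS hα⟩
    ⟨S.τ β, S.c_eq_one_of_mem_active hS hβ⟩ ⟨S.τ γ, S.c_eq_one_of_mem_active hS hγ⟩
    (show S.τ α = S.τ β + S.τ γ by rw [← h, map_add])

theorem tau_ne_of_sub_add_notMem_pos [FiniteDimensional ℂ L] (hS : S.Spherical)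
    {α β β' : V} (hα : α ∈ S.active) (hβ : β ∈ S.active) (hαβ : α - β ∈ S.pos)
    (hβ' : β' ∈ S.active) (hμ : α - β + β' ∉ S.pos) : S.τ β ≠ S.τ β' := by
  intro hτ
  have hsum : β + (α - β) = α := add_sub_cancel β α
  have hzn : S.g (α - β) ≤ S.n := by
    by_contra h
    exact S.notMem_active_of_add hS hα hβ hsum ⟨hαβ, h⟩
  obtain ⟨x, hx, z, hz, hxz⟩ := S.bracket_ne β hβ.1 (α - β) hαβ (by rw [hsum]; exact hα.1)
  -- `𝔲_w = 𝔤_β' + 𝔫_w` for `w = τ β = τ β'`, so `x = y + m` with `y ∈ 𝔤_β'`, `m ∈ 𝔫`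
  have hx' : x ∈ S.g β' ⊔ (S.n ⊓ S.uSp (S.τ β')) := by
    rw [S.sup_inf_uSp_eq hS (S.g_le_uSp hβ'.1) hβ'.2, ← hτ]
    exact S.g_le_uSp hβ.1 hx
  obtain ⟨y, hy, m, hm, rfl⟩ := mem_sup.mp hx'
  have hyz : ⁅y, z⁆ = 0 := by
    have := S.bracket_mem β' (α - β) y hy z hz
    rwa [add_comm, S.g_bot _ hμ, mem_bot] at this
  have hmz : ⁅m, z⁆ ∈ S.n := S.n_bracket m (mem_inf.mp hm).1 z (hzn hz)
  refine hα.2 (S.g_le_of_mem hα.1 (hsum ▸ S.bracket_mem β (α - β) _ hx z hz) hxz ?_)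
  rwa [add_lie, hyz, zero_add]

theorem mem_active_of_mem_family {α β : V} (hα : α ∈ S.active) (hβ : β ∈ S.family α) :
    β ∈ S.active := by
  rcases hβ with rfl | hβ
  exacts [hα, hβ.1]

theorem supp_subset_of_mem_family {α β : V} (hα : α ∈ S.roots) (hβ : β ∈ S.family α) :
    S.Supp β ⊆ S.Supp α := by
  rcases hβ with rfl | hβ
  exacts [le_rfl, S.supp_subset_of_mem_summands hα ⟨hβ.1.1, hβ.2⟩]

theorem injOn_tau_family [FiniteDimensional ℂ L] (hS : S.Spherical) {α : V}
    (hα : α ∈ S.active) {N : ℝ} (hK : S.IsSimplyLacedOn (S.Supp α) N) :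
    Set.InjOn S.τ (S.family α) := by
  have hαr := hα.1.1
  have hspan : ∀ β ∈ S.family α, β ∈ span ℝ (S.Supp α : Set V) := fun β hβ =>
    S.mem_span_of_supp_subset (S.mem_active_of_mem_family hα hβ).1.1
      (S.supp_subset_of_mem_family hαr hβ)
  have hαK := hspan α (Set.mem_insert α _)
  have key : ∀ β ∈ S.family α, ∀ β' ∈ S.family α, β ≠ α → S.τ β = S.τ β' → β = β' := by
    intro β hβ β' hβ' hβα hτ
    obtain ⟨hβa, hαβ⟩ := hβ.resolve_left hβα
    have hβ'a := S.mem_active_of_mem_family hα hβ'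
    have hαβ' : N / 2 ≤ ⟪α, β'⟫_ℝ := by
      by_cases hβ'α : β' = α
      · rw [hβ'α, hK α hαr hαK]
        linarith [hK.zero_lt hαr hαK]
      · exact (hK.inner_eq_of_sub_mem hαr hαK hβ'a.1.1 (hspan β' hβ')
          (hβ'.resolve_left hβ'α).2.1).ge
    by_contra hne
    refine S.tau_ne_of_sub_add_notMem_pos hS hα hβa hαβ hβ'a (fun hμ => ?_) hτ
    exact hK.sub_add_notMem_roots hαr hαK hβa.1.1 (hspan β hβ) hβ'a.1.1 (hspan β' hβ')
      hαβ.1 hαβ' hne hμ.1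
  intro β hβ β' hβ' hτ
  by_cases hβα : β = α
  · by_cases hβ'α : β' = α
    · rw [hβα, hβ'α]
    · exact (key β' hβ' β hβ hβ'α hτ.symm).symm
  · exact key β hβ β' hβ' hβα hτ

theorem ncard_family_le_card_supp [FiniteDimensional ℂ L] (hS : S.Spherical) {α : V}
    (hα : α ∈ S.active) {N : ℝ} (hK : S.IsSimplyLacedOn (S.Supp α) N) :
    (S.family α).ncard ≤ (S.Supp α).card := by
  have hc : S.τ '' S.family α ⊆ {w | S.c w = 1} := by
    rintro _ ⟨β, hβ, rfl⟩
    exact S.c_eq_one_of_mem_active hS (S.mem_active_of_mem_family hα hβ)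
  have hli : LinearIndepOn ℝ id (S.τ '' S.family α) :=
    (show LinearIndepOn ℝ id {w | S.c w = 1} from hS.2).mono hc
  refine (((linearIndepOn_iff_image (S.injOn_tau_family hS hα hK)).mpr hli).of_comp S.τ
    ).ncard_le_card_of_subset_span fun β hβ => ?_
  exact S.mem_span_of_supp_subset (S.mem_active_of_mem_family hα hβ).1.1
    (S.supp_subset_of_mem_family hα.1.1 hβ)

theorem ncard_summands_add_two_le_two_mul_ncard_family {α : V} (hα : α ∈ S.active) :
    (S.summands α).ncard + 2 ≤ 2 * (S.family α).ncard := by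
  set A := {β ∈ S.active | α - β ∈ S.pos}
  have hαA : α ∉ A := fun h => S.ne_zero 0 (by simpa using h.2.1) rfl
  have hAfin : A.Finite := S.finite.subset fun β hβ => hβ.1.1.1
  have hfamily : (S.family α).ncard = A.ncard + 1 := Set.ncard_insert_of_notMem hαA hAfin
  have hsub : S.summands α ⊆ A ∪ (α - ·) '' A := by
    intro β hβ
    by_cases hβn : S.g β ≤ S.n
    · exact Or.inr ⟨α - β, ⟨S.mem_active_of_add hα hβ.1 hβ.2 (add_sub_cancel β α) hβn,
        by rw [sub_sub_cancel]; exact hβ.1⟩, sub_sub_cancel α β⟩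
    · exact Or.inl ⟨⟨hβ.1, hβn⟩, hβ.2⟩
  have := Set.ncard_le_ncard hsub (hAfin.union (hAfin.image _))
  have := Set.ncard_union_le A ((α - ·) '' A)
  have := Set.ncard_image_le (f := (α - ·)) hAfin
  omega

end SphericalSetup

/-- Let `H` be a connected solvable spherical subgroup of `G` standardly embedded in `B`
and `α` an active root.  If the root subsystem `Δ(α) = Δ ∩ ⟨Supp α⟩` is of type `A`, `D`
or `E` (i.e. all its roots have the same length), then `α` is the sum of all simple roots
in its support, each with coefficient one. -/
theorem active_root_eq_sum_supp_of_simplyLaced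
    {V : Type} [NormedAddCommGroup V] [InnerProductSpace ℝ V]
    {W : Type} [AddCommGroup W] [Module ℝ W]
    {L : Type} [LieRing L] [LieAlgebra ℂ L] [FiniteDimensional ℂ L]
    (S : SphericalSetup V W L) (hS : S.Spherical)
    {α : V} (hα : α ∈ S.active)
    (hADE : ∀ β ∈ S.roots, β ∈ Submodule.span ℝ ((S.Supp α : Set V)) →
      ∀ γ ∈ S.roots, γ ∈ Submodule.span ℝ ((S.Supp α : Set V)) → ‖β‖ = ‖γ‖) :
    α = ∑ γ ∈ S.Supp α, γ := by
  have hαr : α ∈ S.roots := hα.1.1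
  have hK : S.IsSimplyLacedOn (S.Supp α) ⟪α, α⟫_ℝ := fun δ hδ hδK => by
    rw [real_inner_self_eq_norm_sq, real_inner_self_eq_norm_sq,
      hADE δ hδ hδK α hαr (S.mem_span_of_supp_subset hαr le_rfl)]
  refine S.eq_sum_supp_of_height_le_card hα.1 ?_
  have := hK.two_mul_height_le_ncard_summands_add_two hα.1 le_rfl
  have := S.ncard_summands_add_two_le_two_mul_ncard_family hα
  have := S.ncard_family_le_card_supp hS hα hK
  omega
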